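/- arXiv:2203.01971 — 2 statements merged into one kernel-verified Lean document; each statement's English description precedes it below -/
import Mathlib

section
/- Let R and R' be bounded normal operators on a complex Hilbert space H. Then the Hausdorff distance between their spectra satisfies d_H(σ(R), σ(R')) ≤ ‖R − R'‖, where ‖·‖ is the operator norm. -/
/-!
For a normal element `a` of a C⋆-algebra the continuous functional calculus is isometric,
so `‖(z - a)⁻¹‖ = sup_{x ∈ σ(a)} |z - x|⁻¹ = dist(z, σ(a))⁻¹`. Hence if
`‖b - a‖ < dist(z, σ(a))`, then `z - b` is a perturbation of the invertible `z - a` smaller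
than `‖(z - a)⁻¹‖⁻¹`, so it is invertible and `z ∉ σ(b)`. Applying this in both directions
bounds the Hausdorff distance.
-/

open Metric

section

variable {A : Type*} [CStarAlgebra A]

lemma IsStarNormal.norm_inverse_algebraMap_sub_le {a : A} [IsStarNormal a] {z : ℂ}
    (hz : z ∉ spectrum ℂ a) :
    ‖Ring.inverse (algebraMap ℂ A z - a)‖ ≤ (infDist z (spectrum ℂ a))⁻¹ := by
  have hcfc : cfc (fun x : ℂ ↦ z - x) a = algebraMap ℂ A z - a := by
    rw [cfc_sub .., cfc_const z a, cfc_id' ℂ a]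
  have hne : ∀ x ∈ spectrum ℂ a, z - x ≠ 0 := fun x hx ↦
    sub_ne_zero.mpr (ne_of_mem_of_not_mem hx hz).symm
  rw [← hcfc, ← cfc_inv (fun x ↦ z - x) a hne]
  refine norm_cfc_le (inv_nonneg.mpr infDist_nonneg) fun x hx ↦ ?_
  have hpos : 0 < infDist z (spectrum ℂ a) :=
    ((spectrum.isClosed a).notMem_iff_infDist_pos ⟨x, hx⟩).mp hz
  rw [norm_inv, ← dist_eq_norm]
  exact inv_anti₀ hpos (infDist_le_dist_of_mem hx)

lemma IsStarNormal.infDist_spectrum_le_norm_sub {a b : A} [IsStarNormal a] {z : ℂ}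
    (hz : z ∈ spectrum ℂ b) : infDist z (spectrum ℂ a) ≤ ‖b - a‖ := by
  have : Nontrivial A := not_subsingleton_iff_nontrivial.mp fun _ ↦ by
    simp [spectrum.of_subsingleton] at hz
  by_contra! hlt
  have hza : z ∉ spectrum ℂ a := fun h ↦
    (norm_nonneg (b - a)).not_gt (infDist_zero_of_mem h ▸ hlt)
  obtain ⟨u, hu⟩ := spectrum.notMem_iff.mp hza
  have hinv : ‖(↑u⁻¹ : A)‖ ≤ (infDist z (spectrum ℂ a))⁻¹ := by
    simpa [← hu, Ring.inverse_unit] using norm_inverse_algebraMap_sub_le hza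
  have hnear : ‖(algebraMap ℂ A z - b) - u‖ < ‖(↑u⁻¹ : A)‖⁻¹ :=
    calc ‖(algebraMap ℂ A z - b) - u‖ = ‖b - a‖ := by
          rw [hu, sub_sub_sub_cancel_left, norm_sub_rev]
      _ < infDist z (spectrum ℂ a) := hlt
      _ ≤ ‖(↑u⁻¹ : A)‖⁻¹ := le_inv_of_le_inv₀ (Units.norm_pos _) hinv
  exact spectrum.notMem_iff.mpr (u.ofNearby _ hnear).isUnit hz

lemma hausdorffDist_spectrum_le_norm_sub (a b : A) [IsStarNormal a] [IsStarNormal b] :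
    hausdorffDist (spectrum ℂ a) (spectrum ℂ b) ≤ ‖a - b‖ := by
  refine hausdorffDist_le_of_infDist (norm_nonneg _) (fun z hz ↦ ?_) fun z hz ↦ ?_
  · exact IsStarNormal.infDist_spectrum_le_norm_sub (a := b) hz
  · simpa only [norm_sub_rev] using IsStarNormal.infDist_spectrum_le_norm_sub (a := a) hz

end

/-- For bounded normal operators `R, R'` on a complex Hilbert space, the Hausdorff
distance between their spectra is bounded by the operator norm of their difference. -/
theorem stmt4 {H : Type*} [NormedAddCommGroup H] [InnerProductSpace ℂ H] [CompleteSpace H]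
    (R R' : H →L[ℂ] H) (hR : IsStarNormal R) (hR' : IsStarNormal R') :
    Metric.hausdorffDist (spectrum ℂ R) (spectrum ℂ R') ≤ ‖R - R'‖ := by
  exact hausdorffDist_spectrum_le_norm_sub R R'
end

section
/- Let H and H_ε be Hilbert spaces, and J_ε : H → H_ε, J̃_ε : H_ε → H bounded linear operators satisfying |(u, J_ε f)_{H_ε} − (J̃_ε u, f)_H| ≤ δ_ε ‖f‖_H ‖u‖_{H_ε} for all f ∈ H, u ∈ H_ε (i.e., ‖J_ε − J̃_ε*‖ ≤ δ_ε). Suppose additionally ‖f − J̃_ε J_ε f‖_H ≤ δ_ε ‖f‖_{H¹} for all f in a dense subspace H¹ ⊆ H equipped with a norm ‖·‖_{H¹} ≥ ‖·‖_H arising from a nonnegative closed form a via ‖f‖²_{H¹} = a[f,f] + ‖f‖²_H. If δ_ε < 2/3, then for all f ∈ H¹: ‖f‖²_H ≤ (1 + 4δ_ε/(2−3δ_ε)) ‖J_ε f‖²_{H_ε} + (δ_ε/(2−3δ_ε)) a[f,f]. -/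
/-- If `J_ε : H → H_ε`, `J̃_ε : H_ε → H` satisfy `|(u, J_ε f) − (J̃_ε u, f)| ≤ δ‖f‖‖u‖` and
`‖f − J̃_ε J_ε f‖ ≤ δ‖f‖_{H¹}` on the form domain `D` (with `‖f‖²_{H¹} = a[f,f] + ‖f‖²`,
`q f = a[f,f] ≥ 0`), and `δ < 2/3`, then
`‖f‖² ≤ (1 + 4δ/(2−3δ))‖J_ε f‖² + (δ/(2−3δ)) a[f,f]` for all `f ∈ D`. -/
theorem stmt7 {H Hε : Type*} [NormedAddCommGroup H] [InnerProductSpace ℂ H] [CompleteSpace H]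
    [NormedAddCommGroup Hε] [InnerProductSpace ℂ Hε] [CompleteSpace Hε]
    (D : Submodule ℂ H) (hD : Dense (D : Set H))
    (q : D → ℝ) (hq : ∀ f : D, 0 ≤ q f)
    (J : H →L[ℂ] Hε) (J' : Hε →L[ℂ] H)
    (δ : ℝ) (hδ0 : 0 < δ) (hδ : δ < 2 / 3)
    (h1 : ∀ (f : H) (u : Hε),
      ‖(inner ℂ u (J f) : ℂ) - (inner ℂ (J' u) f : ℂ)‖ ≤ δ * ‖f‖ * ‖u‖)
    (h2 : ∀ f : D, ‖(f : H) - J' (J (f : H))‖ ≤ δ * Real.sqrt (q f + ‖(f : H)‖ ^ 2)) :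
    ∀ f : D, ‖(f : H)‖ ^ 2 ≤ (1 + 4 * δ / (2 - 3 * δ)) * ‖J (f : H)‖ ^ 2
      + (δ / (2 - 3 * δ)) * q f := by
  intro f
  have hd : (0:ℝ) < 2 - 3 * δ := by linarith
  set N : ℝ := ‖(f : H)‖ with hN
  set E : ℝ := ‖J (f : H)‖ with hE
  set S : ℝ := Real.sqrt (q f + N ^ 2) with hS
  have hS2 : S ^ 2 = q f + N ^ 2 := Real.sq_sqrt (add_nonneg (hq f) (sq_nonneg _))
  have hS0 : 0 ≤ S := Real.sqrt_nonneg _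
  -- key inequality
  have key : N ^ 2 ≤ δ * S * N + E ^ 2 + δ * N * E := by
    have e1 : (inner ℂ (f : H) (f : H) : ℂ)
        = inner ℂ ((f : H) - J' (J (f : H))) (f : H) + inner ℂ (J' (J (f : H))) (f : H) := by
      simp [inner_sub_left]
    have b1 : ‖(inner ℂ ((f : H) - J' (J (f : H))) (f : H) : ℂ)‖ ≤ δ * S * N := by
      calc ‖(inner ℂ ((f : H) - J' (J (f : H))) (f : H) : ℂ)‖
          ≤ ‖(f : H) - J' (J (f : H))‖ * ‖(f : H)‖ := norm_inner_le_norm _ _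
        _ ≤ δ * S * N := by
            exact mul_le_mul_of_nonneg_right (h2 f) (norm_nonneg _)
    have b2 : ‖(inner ℂ (J' (J (f : H))) (f : H) : ℂ)‖ ≤ E ^ 2 + δ * N * E := by
      have h := h1 (f : H) (J (f : H))
      have hii : ‖(inner ℂ (J (f : H)) (J (f : H)) : ℂ)‖ = E ^ 2 := by
        rw [inner_self_eq_norm_sq_to_K]
        simp [hE]
      calc ‖(inner ℂ (J' (J (f : H))) (f : H) : ℂ)‖
          = ‖(inner ℂ (J (f : H)) (J (f : H)) : ℂ)
              - ((inner ℂ (J (f : H)) (J (f : H)) : ℂ) - inner ℂ (J' (J (f : H))) (f : H))‖ := by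
            ring_nf
        _ ≤ ‖(inner ℂ (J (f : H)) (J (f : H)) : ℂ)‖
              + ‖(inner ℂ (J (f : H)) (J (f : H)) : ℂ) - inner ℂ (J' (J (f : H))) (f : H)‖ :=
            norm_sub_le _ _
        _ ≤ E ^ 2 + δ * N * E := by
            rw [hii]; exact add_le_add_right h _
    have e2 : N ^ 2 = ‖(inner ℂ (f : H) (f : H) : ℂ)‖ := by
      rw [inner_self_eq_norm_sq_to_K]; simp [hN]
    calc N ^ 2 = ‖(inner ℂ (f : H) (f : H) : ℂ)‖ := e2
      _ = ‖(inner ℂ ((f : H) - J' (J (f : H))) (f : H) : ℂ)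
            + (inner ℂ (J' (J (f : H))) (f : H) : ℂ)‖ := by rw [← e1]
      _ ≤ ‖(inner ℂ ((f : H) - J' (J (f : H))) (f : H) : ℂ)‖
            + ‖(inner ℂ (J' (J (f : H))) (f : H) : ℂ)‖ := norm_add_le _ _
      _ ≤ δ * S * N + (E ^ 2 + δ * N * E) := add_le_add b1 b2
      _ = δ * S * N + E ^ 2 + δ * N * E := by ring
  have main : (2 - 3 * δ) * N ^ 2 ≤ (2 + δ) * E ^ 2 + δ * q f := by
    nlinarith [sq_nonneg (S - N), sq_nonneg (N - E), key, hS2, hq f, hδ0.le]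
  have hco : (1 + 4 * δ / (2 - 3 * δ)) = (2 + δ) / (2 - 3 * δ) := by
    rw [eq_div_iff hd.ne', add_mul, div_mul_cancel₀ _ hd.ne']; ring
  rw [hco, div_mul_eq_mul_div, div_mul_eq_mul_div, ← add_div, le_div_iff₀ hd]
  linarith [main]
end
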